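/- arXiv:1501.06243 — 7 statements merged into one kernel-verified Lean document; each statement's English description precedes it below -/
import Mathlib

section
/- Let S be a nonempty closed convex subset of ℝ^{d1×d2} (equipped with the Frobenius inner product), let f : ℝ^{d1×d2} → ℝ be convex and differentiable with gradient satisfying ‖∇f(X) − ∇f(Y)‖_F ≤ L‖X−Y‖_F for all X, Y and some L > 0, and let M̂ be a minimizer of f over S. Define the accelerated proximal gradient iterates: Z_0 = M_0 ∈ S, and for k ≥ 1, M_k = Π_S(Z_{k−1} − (1/L)∇f(Z_{k−1})) and Z_k = M_k + ((k−1)/(k+2))(M_k − M_{k−1}). Then for every k ≥ 1, f(M_k) − f(M̂) ≤ 2L‖M_0 − M̂‖_F² / (k+1)². -/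
/-!
Beck–Teboulle's Lyapunov argument for FISTA with weights `t n = (n + 1) / 2`. A projected
gradient step `p = Π_S (y - L⁻¹ ∇f y)` satisfies, for every `x ∈ S`,
`f x - f p ≥ L/2 ‖p - y‖² + L ⟪y - x, p - y⟫`:
add the descent lemma for `L`-smooth `f`, the first-order convexity inequality at `y`, and the
variational inequality `⟪y - L⁻¹ ∇f y - p, x - p⟫ ≤ 0` of the projection.
Using it with `x = M k` weighted by `t - 1` and with `x = M̂` weighted by `1` shows that
`E k = 2/L · t_k² (f (M k) - f M̂) + ‖t_k M k - (t_k - 1) M (k-1) - M̂‖²`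
does not increase: the momentum coefficient `(k - 1)/(k + 2) = (t_k - 1)/t_{k+1}` is exactly
what makes `t_{k+1} Z k - (t_{k+1} - 1) M k = t_k M k - (t_k - 1) M (k-1)`, and
`t_{k+1} (t_{k+1} - 1) ≤ t_k²`. Finally `E 1 ≤ ‖M 0 - M̂‖²`.
-/

open RealInnerProductSpace

section

variable {E : Type*} [NormedAddCommGroup E] [InnerProductSpace ℝ E]

theorem real_inner_sub_sub_nonpos_of_forall_norm_sub_le {S : Set E} (hS : Convex ℝ S)
    {u v : E} (hv : v ∈ S) (hmin : ∀ x ∈ S, ‖v - u‖ ≤ ‖x - u‖) {w : E} (hw : w ∈ S) :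
    ⟪u - v, w - v⟫ ≤ 0 := by
  have : Nonempty S := ⟨⟨v, hv⟩⟩
  refine (norm_eq_iInf_iff_real_inner_le_zero hS hv).1 (le_antisymm ?_ ?_) w hw
  · exact le_ciInf fun x => by simpa only [norm_sub_rev u] using hmin x x.2
  · exact ciInf_le ⟨0, by rintro _ ⟨x, rfl⟩; exact norm_nonneg _⟩ (⟨v, hv⟩ : S)

section

variable [CompleteSpace E] {f : E → ℝ}

theorem HasGradientAt.hasDerivAt_comp_add_smul {g y d : E} {t : ℝ}
    (hg : HasGradientAt f g (y + t • d)) :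
    HasDerivAt (fun s : ℝ => f (y + s • d)) ⟪g, d⟫ t := by
  have hline : HasDerivAt (fun s : ℝ => y + s • d) d t := by
    simpa using ((hasDerivAt_id t).smul_const d).const_add y
  have h := hg.hasFDerivAt.comp_hasDerivAt t hline
  simp only [InnerProductSpace.toDual_apply_apply] at h
  exact h

theorem ConvexOn.add_inner_sub_le_of_hasGradientAt (hf : ConvexOn ℝ Set.univ f) {g y : E}
    (hg : HasGradientAt f g y) (x : E) : f y + ⟪g, x - y⟫ ≤ f x := by
  have hline : ConvexOn ℝ Set.univ (fun s : ℝ => f (y + s • (x - y))) := by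
    simpa [Function.comp_def, AffineMap.lineMap_apply, add_comm] using
      hf.comp_affineMap (AffineMap.lineMap y x : ℝ →ᵃ[ℝ] E)
  have hder : HasDerivAt (fun s : ℝ => f (y + s • (x - y))) ⟪g, x - y⟫ 0 :=
    HasGradientAt.hasDerivAt_comp_add_smul (by simpa using hg)
  have := hline.le_slope_of_hasDerivAt (Set.mem_univ 0) (Set.mem_univ 1) one_pos hder
  simp only [slope_def_field, one_smul, add_sub_cancel, zero_smul, add_zero, sub_zero,
    div_one] at this
  linarith

theorem le_add_inner_add_sq_of_lipschitz_gradient {f' : E → E}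
    (hgrad : ∀ x, HasGradientAt f (f' x) x) {L : ℝ}
    (hlip : ∀ x y, ‖f' x - f' y‖ ≤ L * ‖x - y‖) (y z : E) :
    f z ≤ f y + ⟪f' y, z - y⟫ + L / 2 * ‖z - y‖ ^ 2 := by
  set d := z - y
  set φ : ℝ → ℝ := fun s => f (y + s • d) - s * ⟪f' y, d⟫ - L / 2 * ‖d‖ ^ 2 * s ^ 2
  have hφ : ∀ s, HasDerivAt φ (⟪f' (y + s • d), d⟫ - ⟪f' y, d⟫ - L * ‖d‖ ^ 2 * s) s := by
    intro s
    refine ((((hgrad _).hasDerivAt_comp_add_smul).sub ((hasDerivAt_id s).mul_const _)).sub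
      (((hasDerivAt_id s).pow 2).const_mul (L / 2 * ‖d‖ ^ 2))).congr_deriv ?_
    simp only [id, one_mul, Nat.cast_ofNat, mul_one]
    ring
  have hφ' : ∀ s ∈ interior (Set.Ici (0 : ℝ)),
      ⟪f' (y + s • d), d⟫ - ⟪f' y, d⟫ - L * ‖d‖ ^ 2 * s ≤ 0 := by
    intro s hs
    rw [interior_Ici, Set.mem_Ioi] at hs
    rw [sub_nonpos]
    calc ⟪f' (y + s • d), d⟫ - ⟪f' y, d⟫ = ⟪f' (y + s • d) - f' y, d⟫ := (inner_sub_left ..).symm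
      _ ≤ ‖f' (y + s • d) - f' y‖ * ‖d‖ := real_inner_le_norm _ _
      _ ≤ L * ‖s • d‖ * ‖d‖ := by
        gcongr; simpa using hlip (y + s • d) y
      _ = L * ‖d‖ ^ 2 * s := by rw [norm_smul, Real.norm_of_nonneg hs.le]; ring
  have hanti : AntitoneOn φ (Set.Ici 0) :=
    antitoneOn_of_hasDerivWithinAt_nonpos (convex_Ici 0)
      (fun s _ => (hφ s).continuousAt.continuousWithinAt)
      (fun s _ => (hφ s).hasDerivWithinAt) hφ'
  have := hanti Set.self_mem_Ici (Set.mem_Ici.2 zero_le_one) zero_le_one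
  simp only [φ, d, one_smul, add_sub_cancel, one_mul, one_pow, mul_one, zero_smul, add_zero,
    zero_mul, sub_zero, ne_eq, OfNat.ofNat_ne_zero, not_false_eq_true, zero_pow, mul_zero] at this
  linarith

theorem sq_add_inner_le_sub_of_projGradStep {S : Set E} (hS : Convex ℝ S) {f' : E → E}
    (hf : ConvexOn ℝ Set.univ f) (hgrad : ∀ x, HasGradientAt f (f' x) x) {L : ℝ} (hL : 0 < L)
    (hlip : ∀ x y, ‖f' x - f' y‖ ≤ L * ‖x - y‖) {y p : E} (hp : p ∈ S)
    (hpmin : ∀ x ∈ S, ‖p - (y - (1 / L) • f' y)‖ ≤ ‖x - (y - (1 / L) • f' y)‖)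
    {x : E} (hx : x ∈ S) :
    L / 2 * ‖p - y‖ ^ 2 + L * ⟪y - x, p - y⟫ ≤ f x - f p := by
  have hdescent := le_add_inner_add_sq_of_lipschitz_gradient hgrad hlip y p
  have hconvex := hf.add_inner_sub_le_of_hasGradientAt (hgrad y) x
  have hproj := real_inner_sub_sub_nonpos_of_forall_norm_sub_le hS hp hpmin hx
  set a := p - y
  set b := x - y
  have hpoint : y - (1 / L) • f' y - p = -(a + (1 / L) • f' y) := by simp only [a]; abel
  have hdir : x - p = b - a := by simp only [a, b]; abel
  rw [hpoint, hdir] at hproj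
  simp only [inner_neg_left, inner_add_left, inner_sub_right, real_inner_smul_left,
    real_inner_self_eq_norm_sq] at hproj
  have hyx : y - x = -b := by simp only [b]; abel
  rw [hyx, inner_neg_left, real_inner_comm a b]
  have hscaled := mul_le_mul_of_nonneg_left hproj hL.le
  field_simp at hscaled
  linarith

end

theorem fista_lyapunov_step {f : E → ℝ} {S : Set E} {L : ℝ} (hL : 0 < L) {y p : E}
    (hstep : ∀ x ∈ S, L / 2 * ‖p - y‖ ^ 2 + L * ⟪y - x, p - y⟫ ≤ f x - f p)
    {m x : E} (hm : m ∈ S) (hx : x ∈ S) {t : ℝ} (ht : 1 ≤ t) :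
    ‖t • p - (t - 1) • m - x‖ ^ 2 + 2 / L * t ^ 2 * (f p - f x) ≤
      ‖t • y - (t - 1) • m - x‖ ^ 2 + 2 / L * (t * (t - 1)) * (f m - f x) := by
  set w := t • y - (t - 1) • m - x
  have hw : (t - 1) • (y - m) + (y - x) = w := by module
  have hp : t • p - (t - 1) • m - x = t • (p - y) + w := by module
  have hcomb : L / 2 * t * ‖p - y‖ ^ 2 + L * ⟪w, p - y⟫ ≤
      (t - 1) * (f m - f x) - t * (f p - f x) := by
    have hcm := mul_le_mul_of_nonneg_left (hstep m hm) (sub_nonneg.2 ht)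
    have hcx := hstep x hx
    rw [← hw, inner_add_left, real_inner_smul_left]
    linarith
  have hscaled := mul_le_mul_of_nonneg_left hcomb (by positivity : 0 ≤ 2 * t / L)
  rw [hp, norm_add_sq_real, real_inner_smul_left, norm_smul, Real.norm_of_nonneg (by linarith),
    real_inner_comm]
  have hcancel : 2 * t / L * (L / 2 * t * ‖p - y‖ ^ 2 + L * ⟪w, p - y⟫) =
      t ^ 2 * ‖p - y‖ ^ 2 + 2 * (t * ⟪w, p - y⟫) := by
    field_simp
  rw [hcancel] at hscaled
  linear_combination hscaled

end

noncomputable def fistaWeight (n : ℕ) : ℝ := (n + 1) / 2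

theorem one_le_fistaWeight_succ (n : ℕ) : 1 ≤ fistaWeight (n + 1) := by
  rw [fistaWeight]; push_cast; linarith [(n.cast_nonneg : (0 : ℝ) ≤ n)]

theorem fistaWeight_succ_mul_sub_one_le (n : ℕ) :
    fistaWeight (n + 1) * (fistaWeight (n + 1) - 1) ≤ fistaWeight n ^ 2 := by
  rw [fistaWeight, fistaWeight]; push_cast; nlinarith

theorem fistaWeight_smul_momentum {E : Type*} [AddCommGroup E] [Module ℝ E] (n : ℕ) {m m' z : E}
    (hz : z = m + (((n + 1 : ℕ) - 1 : ℝ) / ((n + 1 : ℕ) + 2 : ℝ)) • (m - m')) :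
    fistaWeight (n + 2) • z - (fistaWeight (n + 2) - 1) • m =
      fistaWeight (n + 1) • m - (fistaWeight (n + 1) - 1) • m' := by
  subst hz
  have : (n : ℝ) + 3 ≠ 0 := by positivity
  simp only [fistaWeight]
  push_cast
  match_scalars <;> field_simp <;> ring

theorem fista_energy_le {E : Type*} [NormedAddCommGroup E] [InnerProductSpace ℝ E]
    {S : Set E} {f : E → ℝ} {L : ℝ} (hL : 0 < L) {M Z : ℕ → E} {xmin : E}
    (hstep : ∀ n, ∀ x ∈ S,
      L / 2 * ‖M (n + 1) - Z n‖ ^ 2 + L * ⟪Z n - x, M (n + 1) - Z n⟫ ≤ f x - f (M (n + 1)))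
    (hMS : ∀ n, M n ∈ S) (hxmin : xmin ∈ S) (hmin : ∀ x ∈ S, f xmin ≤ f x)
    (hZ0 : Z 0 = M 0)
    (hZ : ∀ n : ℕ,
      Z (n + 1) = M (n + 1) + (((n + 1 : ℕ) - 1 : ℝ) / ((n + 1 : ℕ) + 2 : ℝ)) • (M (n + 1) - M n))
    (n : ℕ) :
    ‖fistaWeight (n + 1) • M (n + 1) - (fistaWeight (n + 1) - 1) • M n - xmin‖ ^ 2 +
      2 / L * fistaWeight (n + 1) ^ 2 * (f (M (n + 1)) - f xmin) ≤ ‖M 0 - xmin‖ ^ 2 := by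
  induction n with
  | zero =>
    have h := fista_lyapunov_step hL (hstep 0) (hMS 0) hxmin (one_le_fistaWeight_succ 0)
    have hw : fistaWeight (0 + 1) = 1 := by norm_num [fistaWeight]
    simpa [hw, hZ0] using h
  | succ n ih =>
    have h := fista_lyapunov_step hL (hstep (n + 1)) (hMS (n + 1)) hxmin (one_le_fistaWeight_succ (n + 1))
    rw [fistaWeight_smul_momentum n (hZ n)] at h
    have hgap := mul_le_mul_of_nonneg_right (fistaWeight_succ_mul_sub_one_le (n + 1))
      (sub_nonneg.2 (hmin _ (hMS (n + 1))))
    have hL' : 0 ≤ 2 / L := by positivity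
    linarith [mul_le_mul_of_nonneg_left hgap hL']

open MeasureTheory Real

theorem accelerated_proximal_gradient_convergence_general (d1 d2 : ℕ)
    (S : Set (EuclideanSpace ℝ (Fin d1 × Fin d2)))
    (hconv : Convex ℝ S)
    (f : EuclideanSpace ℝ (Fin d1 × Fin d2) → ℝ)
    (f' : EuclideanSpace ℝ (Fin d1 × Fin d2) → EuclideanSpace ℝ (Fin d1 × Fin d2))
    (hf : ConvexOn ℝ Set.univ f)
    (hgrad : ∀ x, HasGradientAt f (f' x) x)
    (L : ℝ) (hL : 0 < L)
    (hlip : ∀ x y, ‖f' x - f' y‖ ≤ L * ‖x - y‖)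
    (proj : EuclideanSpace ℝ (Fin d1 × Fin d2) → EuclideanSpace ℝ (Fin d1 × Fin d2))
    (hproj : ∀ y, proj y ∈ S ∧ ∀ x ∈ S, ‖proj y - y‖ ≤ ‖x - y‖)
    (Mhat : EuclideanSpace ℝ (Fin d1 × Fin d2))
    (hMhatS : Mhat ∈ S) (hMhatmin : ∀ x ∈ S, f Mhat ≤ f x)
    (M Z : ℕ → EuclideanSpace ℝ (Fin d1 × Fin d2))
    (hM0 : M 0 ∈ S) (hZ0 : Z 0 = M 0)
    (hiterM : ∀ k : ℕ, M (k + 1) = proj (Z k - (1 / L) • f' (Z k)))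
    (hiterZ : ∀ k : ℕ,
      Z (k + 1) = M (k + 1) + (((k + 1 : ℕ) - 1 : ℝ) / ((k + 1 : ℕ) + 2 : ℝ)) • (M (k + 1) - M k))
    (k : ℕ) (hk : 1 ≤ k) :
    f (M k) - f Mhat ≤ 2 * L * ‖M 0 - Mhat‖ ^ 2 / ((k : ℝ) + 1) ^ 2 := by
  have hMS : ∀ n, M n ∈ S
    | 0 => hM0
    | n + 1 => hiterM n ▸ (hproj _).1
  have hstep : ∀ n, ∀ x ∈ S, L / 2 * ‖M (n + 1) - Z n‖ ^ 2 + L * ⟪Z n - x, M (n + 1) - Z n⟫ ≤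
      f x - f (M (n + 1)) := fun n x hx =>
    sq_add_inner_le_sub_of_projGradStep hconv hf hgrad hL hlip (hMS (n + 1)) (hiterM n ▸ (hproj _).2) hx
  obtain ⟨n, rfl⟩ : ∃ n, k = n + 1 := ⟨k - 1, by omega⟩
  have henergy := fista_energy_le hL hstep hMS hMhatS hMhatmin hZ0 hiterZ n
  have hvalue := (le_add_of_nonneg_left (sq_nonneg _)).trans henergy
  rw [fistaWeight] at hvalue
  rw [le_div_iff₀ (by positivity)]
  field_simp at hvalue
  linarith

/-- Convergence of the accelerated proximal gradient method (Theorem 4). Here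
`ℝ^{d1×d2}` with the Frobenius inner product is modelled as
`EuclideanSpace ℝ (Fin d1 × Fin d2)`, and the projection `Π_S` is given as a map `proj`
characterized as the minimizer of the distance to `S`. The iterates are
`M_k = Π_S(Z_{k−1} − (1/L)∇f(Z_{k−1}))` and `Z_k = M_k + ((k−1)/(k+2))(M_k − M_{k−1})`
for `k ≥ 1`, with `Z_0 = M_0 ∈ S`. -/
theorem accelerated_proximal_gradient_convergence (d1 d2 : ℕ)
    (S : Set (EuclideanSpace ℝ (Fin d1 × Fin d2)))
    (hne : S.Nonempty) (hcl : IsClosed S) (hconv : Convex ℝ S)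
    (f : EuclideanSpace ℝ (Fin d1 × Fin d2) → ℝ)
    (f' : EuclideanSpace ℝ (Fin d1 × Fin d2) → EuclideanSpace ℝ (Fin d1 × Fin d2))
    (hf : ConvexOn ℝ Set.univ f)
    (hgrad : ∀ x, HasGradientAt f (f' x) x)
    (L : ℝ) (hL : 0 < L)
    (hlip : ∀ x y, ‖f' x - f' y‖ ≤ L * ‖x - y‖)
    (proj : EuclideanSpace ℝ (Fin d1 × Fin d2) → EuclideanSpace ℝ (Fin d1 × Fin d2))
    (hproj : ∀ y, proj y ∈ S ∧ ∀ x ∈ S, ‖proj y - y‖ ≤ ‖x - y‖)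
    (Mhat : EuclideanSpace ℝ (Fin d1 × Fin d2))
    (hMhatS : Mhat ∈ S) (hMhatmin : ∀ x ∈ S, f Mhat ≤ f x)
    (M Z : ℕ → EuclideanSpace ℝ (Fin d1 × Fin d2))
    (hM0 : M 0 ∈ S) (hZ0 : Z 0 = M 0)
    (hiterM : ∀ k : ℕ, M (k + 1) = proj (Z k - (1 / L) • f' (Z k)))
    (hiterZ : ∀ k : ℕ,
      Z (k + 1) = M (k + 1) + (((k + 1 : ℕ) - 1 : ℝ) / ((k + 1 : ℕ) + 2 : ℝ)) • (M (k + 1) - M k))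
    (k : ℕ) (hk : 1 ≤ k) :
    f (M k) - f Mhat ≤ 2 * L * ‖M 0 - Mhat‖ ^ 2 / ((k : ℝ) + 1) ^ 2 :=
  accelerated_proximal_gradient_convergence_general d1 d2 S hconv f f' hf hgrad L hL hlip proj hproj
    Mhat hMhatS hMhatmin M Z hM0 hZ0 hiterM hiterZ k hk
end

section
/- Let Y be a Poisson random variable with parameter λ, where 0 < λ ≤ α. Then for every t ≥ α(e² − 3), one has P(Y − λ ≥ t) ≤ e^{−t}. -/
/-!
Chernoff bound with exponent `2`: since `E[e^{sY}] = e^{λ(e^s - 1)}`, Markov's inequality gives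
`P(Y ≥ λ + t) ≤ e^{λ(e² - 1) - 2(λ + t)} = e^{λ(e² - 3) - 2t}`, and `λ(e² - 3) ≤ α(e² - 3) ≤ t`.
-/

open MeasureTheory ProbabilityTheory Real

open scoped NNReal Nat

namespace ProbabilityTheory

lemma hasSum_poissonPMFReal_mul_exp_mul (r : ℝ≥0) (s : ℝ) :
    HasSum (fun n : ℕ ↦ exp (-r) * r ^ n / n ! * exp (s * n)) (exp (r * (exp s - 1))) := by
  have h := (NormedSpace.expSeries_div_hasSum_exp ((r : ℝ) * exp s)).mul_left (exp (-r))
  rw [← exp_eq_exp_ℝ] at h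
  have hterm : (fun n : ℕ ↦ exp (-r) * r ^ n / n ! * exp (s * n)) =
      fun n ↦ exp (-r) * ((r * exp s) ^ n / n !) := by
    funext n
    rw [mul_pow, ← exp_nat_mul, mul_comm (n : ℝ) s]
    ring
  rwa [hterm, show (r : ℝ) * (exp s - 1) = -r + r * exp s by ring, exp_add]

lemma integrable_exp_mul_poissonMeasure (r : ℝ≥0) (s : ℝ) :
    Integrable (fun n : ℕ ↦ exp (s * n)) (poissonMeasure r) := by
  simpa [integrable_poissonMeasure_iff, abs_of_pos (exp_pos _)]
    using (hasSum_poissonPMFReal_mul_exp_mul r s).summable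

lemma mgf_poissonMeasure (r : ℝ≥0) (s : ℝ) :
    mgf (fun n : ℕ ↦ (n : ℝ)) (poissonMeasure r) s = exp (r * (exp s - 1)) :=
  (hasSum_integral_poissonMeasure (integrable_exp_mul_poissonMeasure r s)).unique
    (hasSum_poissonPMFReal_mul_exp_mul r s)

lemma poissonMeasure_real_ge_le_exp (r : ℝ≥0) {s : ℝ} (hs : 0 ≤ s) (a : ℝ) :
    (poissonMeasure r).real {n : ℕ | a ≤ n} ≤ exp (r * (exp s - 1) - s * a) := by
  have h := measure_ge_le_exp_mul_mgf a hs (integrable_exp_mul_poissonMeasure r s)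
  rwa [mgf_poissonMeasure, ← exp_add, neg_mul, neg_add_eq_sub] at h

end ProbabilityTheory

/-- Tail bound for a Poisson random variable (Lemma 1): if `Y ~ Poisson(λ)` with
`0 < λ ≤ α`, then `P(Y − λ ≥ t) ≤ e^{−t}` for all `t ≥ α(e² − 3)`. -/
theorem poisson_tail_bound (α lam t : ℝ) (hlam : 0 < lam) (hle : lam ≤ α)
    (ht : α * (Real.exp 2 - 3) ≤ t) :
    poissonMeasure lam.toNNReal {k : ℕ | t ≤ (k : ℝ) - lam} ≤ ENNReal.ofReal (Real.exp (-t)) := by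
  have hset : {k : ℕ | t ≤ (k : ℝ) - lam} = {k : ℕ | t + lam ≤ k} := by
    ext; simp [le_sub_iff_add_le]
  have hexp : (3 : ℝ) ≤ exp 2 := by linarith [add_one_le_exp (2 : ℝ)]
  have hlam_le : lam * (exp 2 - 3) ≤ t :=
    (mul_le_mul_of_nonneg_right hle (by linarith)).trans ht
  rw [hset, ← ofReal_measureReal]
  refine ENNReal.ofReal_le_ofReal ((poissonMeasure_real_ge_le_exp _ zero_le_two _).trans ?_)
  rw [Real.coe_toNNReal _ hlam.le]
  exact exp_le_exp.mpr (by linarith)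
end

section
/- Let 0 < β ≤ α and set T = (α−β)²/(8β). Then for all real x, y with β ≤ x ≤ α and β ≤ y ≤ α, one has 2 − 2·exp(−(1/2)(√x − √y)²) ≥ ((1 − e^{−T})/(4αT)) · (x − y)². -/
/-!
With `s = (√x - √y)² / 2` the right-hand side is `2(1 - e^{-s})`. Since
`(x - y)² = 2s (√x + √y)²` and `4β ≤ (√x + √y)² ≤ 4α`, we get `s ≤ T` and `(x - y)² ≤ 8αs`.
On `[0, T]` the concave function `1 - e^{-s}` lies above its chord `s (1 - e^{-T}) / T`.
-/

open Real

lemma one_sub_exp_neg_div_mul_le {s T : ℝ} (hs : 0 ≤ s) (hsT : s ≤ T) :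
    (1 - exp (-T)) / T * s ≤ 1 - exp (-s) := by
  rcases hs.eq_or_lt with rfl | hs
  · simp
  have hT : 0 < T := hs.trans_le hsT
  -- `-s = (s/T)(-T) + (1 - s/T)·0`
  have hchord := convexOn_exp.2 (Set.mem_univ (-T)) (Set.mem_univ 0)
    (div_nonneg hs.le hT.le) (sub_nonneg.2 ((div_le_one hT).2 hsT)) (add_sub_cancel _ _)
  have hpoint : s / T * -T = -s := by field_simp
  simp only [smul_eq_mul, mul_zero, add_zero, exp_zero, mul_one, hpoint] at hchord
  calc (1 - exp (-T)) / T * s = s / T - s / T * exp (-T) := by ring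
    _ ≤ 1 - exp (-s) := by linarith

lemma sq_sub_eq_sq_sub_sqrt_mul_sq_add_sqrt {x y : ℝ} (hx : 0 ≤ x) (hy : 0 ≤ y) :
    (x - y) ^ 2 = (√x - √y) ^ 2 * (√x + √y) ^ 2 := by
  nth_rw 1 [← sq_sqrt hx, ← sq_sqrt hy]; ring

lemma four_mul_le_sq_sqrt_add_sqrt {β x y : ℝ} (hβ : 0 ≤ β) (hx : β ≤ x) (hy : β ≤ y) :
    4 * β ≤ (√x + √y) ^ 2 :=
  calc 4 * β = (√β + √β) ^ 2 := by rw [← two_mul, mul_pow, sq_sqrt hβ]; norm_num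
    _ ≤ (√x + √y) ^ 2 := by gcongr

lemma sq_sqrt_add_sqrt_le_four_mul {α x y : ℝ} (hα : 0 ≤ α) (hx : x ≤ α) (hy : y ≤ α) :
    (√x + √y) ^ 2 ≤ 4 * α :=
  calc (√x + √y) ^ 2 ≤ (√α + √α) ^ 2 := by gcongr
    _ = 4 * α := by rw [← two_mul, mul_pow, sq_sqrt hα]; norm_num

theorem hellinger_sq_lower_bound_general (α β x y : ℝ) (hβ : 0 < β)
    (hx1 : β ≤ x) (hx2 : x ≤ α) (hy1 : β ≤ y) (hy2 : y ≤ α) :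
    (1 - Real.exp (-((α - β) ^ 2 / (8 * β)))) / (4 * α * ((α - β) ^ 2 / (8 * β)))
        * (x - y) ^ 2 ≤
      2 - 2 * Real.exp (-(1 / 2) * (Real.sqrt x - Real.sqrt y) ^ 2) := by
  set T := (α - β) ^ 2 / (8 * β)
  set s := (1 / 2) * (√x - √y) ^ 2 with hs
  have hα : 0 < α := hβ.trans_le (hx1.trans hx2)
  have hxy := sq_sub_eq_sq_sub_sqrt_mul_sq_add_sqrt (hβ.le.trans hx1) (hβ.le.trans hy1)
  have hlo := four_mul_le_sq_sqrt_add_sqrt hβ.le hx1 hy1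
  have hhi := sq_sqrt_add_sqrt_le_four_mul hα.le hx2 hy2
  have hsT : s ≤ T := by
    have hxy_le : (x - y) ^ 2 ≤ (α - β) ^ 2 := sq_le_sq' (by linarith) (by linarith)
    rw [le_div_iff₀ (by positivity)]
    nlinarith [mul_le_mul_of_nonneg_left hlo (sq_nonneg (√x - √y))]
  have hxy_s : (x - y) ^ 2 ≤ 8 * α * s := by
    nlinarith [mul_le_mul_of_nonneg_left hhi (sq_nonneg (√x - √y))]
  have hT : 0 ≤ T := by positivity
  rw [neg_mul, ← hs]
  calc (1 - exp (-T)) / (4 * α * T) * (x - y) ^ 2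
      ≤ (1 - exp (-T)) / (4 * α * T) * (8 * α * s) := by
        have hgap : 0 ≤ 1 - exp (-T) := sub_nonneg.2 (exp_le_one_iff.2 (neg_nonpos.2 hT))
        gcongr
    _ = 2 * ((1 - exp (-T)) / T * s) := by field_simp; ring
    _ ≤ 2 - 2 * exp (-s) := by linarith [one_sub_exp_neg_div_mul_le (by positivity) hsT]

/-- For `β ≤ x, y ≤ α` with `0 < β ≤ α` and `T = (α−β)²/(8β)`, the squared Hellinger
distance between `Poisson(x)` and `Poisson(y)` satisfies
`2 − 2 exp(−(1/2)(√x − √y)²) ≥ ((1 − e^{−T})/(4αT)) (x − y)²`. -/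
theorem hellinger_sq_lower_bound (α β x y : ℝ) (hβ : 0 < β) (hβα : β ≤ α)
    (hx1 : β ≤ x) (hx2 : x ≤ α) (hy1 : β ≤ y) (hy2 : y ≤ α) :
    (1 - Real.exp (-((α - β) ^ 2 / (8 * β)))) / (4 * α * ((α - β) ^ 2 / (8 * β)))
        * (x - y) ^ 2 ≤
      2 - 2 * Real.exp (-(1 / 2) * (Real.sqrt x - Real.sqrt y) ^ 2) :=
  hellinger_sq_lower_bound_general α β x y hβ hx1 hx2 hy1 hy2
end

section
/- Let α > 0, let r and d1, d2 be positive integers, and let γ ∈ (0,1] be such that r/γ² is an integer with r/γ² ≤ d1. Define H = {M ∈ ℝ^{d1×d2} : ‖M‖_* ≤ α√(r d1 d2), ‖M‖_∞ ≤ α}. Then there exists a finite set χ ⊆ H of cardinality |χ| ≥ exp(r d2 / (16 γ²)) such that: (1) every entry of every X ∈ χ satisfies |X_ij| = αγ; and (2) for all distinct X, X' ∈ χ, ‖X − X'‖_F² > α² γ² d1 d2 / 2. -/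
/-!
A maximal family of sign patterns on an `n × d2` block (`n = r/γ²`) with pairwise Hamming
distance `> N/4`, `N = n d2`, covers `{±1}^N` by Hamming balls of radius `N/4`, each of size at
most `4^N / 3^(3N/4)`; hence it has at least `exp(N/16)` members (Gilbert–Varshamov).
Repeating the rows of the block cyclically down `d1` rows and scaling by `αγ` gives matrices with
entries `±αγ` and rank `≤ n`, so their nuclear norm is at most `√n` times their Frobenius norm
`αγ√(d1 d2)`, that is `α√(r d1 d2)`. Each block row is repeated at least `⌊d1/n⌋ ≥ d1/(2n)`
times, which turns Hamming distance `> n d2/4` into squared Frobenius distance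
`> α²γ² d1 d2 / 2`.
-/

open Real

/-- The nuclear norm of a real matrix: the sum of its singular values, i.e. the sum of the
square roots of the eigenvalues of `Mᵀ M`. -/
noncomputable def nuclearNorm {d1 d2 : ℕ} (M : Matrix (Fin d1) (Fin d2) ℝ) : ℝ :=
  ∑ i, Real.sqrt ((Matrix.isHermitian_conjTranspose_mul_self M).eigenvalues i)

/-- Squared Frobenius norm. -/
def frobSq {d1 d2 : ℕ} (M : Matrix (Fin d1) (Fin d2) ℝ) : ℝ := ∑ i, ∑ j, (M i j) ^ 2

open Finset
open scoped Matrix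

theorem exists_pairwise_not_rel_covering {α : Type*} [Fintype α]
    {R : α → α → Prop} (hrefl : ∀ x, R x x) (hsymm : ∀ ⦃x y⦄, R x y → R y x) :
    ∃ S : Finset α, (S : Set α).Pairwise (fun x y => ¬ R x y) ∧ ∀ y, ∃ x ∈ S, R x y := by
  classical
  obtain ⟨S, hS, hmax⟩ := exists_max_image
    {S : Finset α | (S : Set α).Pairwise fun x y => ¬ R x y} card ⟨∅, by simp⟩
  simp only [mem_filter, mem_univ, true_and] at hS hmax
  refine ⟨S, hS, fun y => ?_⟩
  by_contra! hfar
  have hyS : y ∉ S := fun hy => hfar y hy (hrefl y)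
  have hins : ((insert y S : Finset α) : Set α).Pairwise fun x y => ¬ R x y := by
    rw [coe_insert]
    exact hS.insert fun x hx _ => ⟨fun h => hfar x hx (hsymm h), hfar x hx⟩
  have := hmax _ hins
  rw [card_insert_of_notMem hyS] at this
  omega

section Hamming

variable {ι : Type*} [Fintype ι] [DecidableEq ι]

theorem card_hammingDist_le_le_sum_choose (x : ι → Bool) (m : ℕ) :
    #{y | hammingDist x y ≤ m} ≤ ∑ k ∈ range (m + 1), (Fintype.card ι).choose k := by
  calc #{y | hammingDist x y ≤ m}
      ≤ #((range (m + 1)).biUnion fun k => (univ : Finset ι).powersetCard k) := by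
        refine card_le_card_of_injOn (fun y => ({i | x i ≠ y i} : Finset ι)) (fun y hy => ?_)
          fun y _ y' _ h => ?_
        · simpa [mem_powersetCard, Nat.lt_succ_iff, hammingDist] using hy
        · funext i
          have hi := congrArg (i ∈ ·) h
          simp only [mem_filter, mem_univ, true_and, eq_iff_iff] at hi
          revert hi
          cases x i <;> cases y i <;> cases y' i <;> simp
    _ ≤ ∑ k ∈ range (m + 1), #((univ : Finset ι).powersetCard k) := card_biUnion_le
    _ = ∑ k ∈ range (m + 1), (Fintype.card ι).choose k := by simp [card_powersetCard]

theorem exists_hammingDist_separated_two_pow_le (m : ℕ) :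
    ∃ S : Finset (ι → Bool), (∀ x ∈ S, ∀ y ∈ S, x ≠ y → m < hammingDist x y) ∧
      2 ^ Fintype.card ι ≤ #S * ∑ k ∈ range (m + 1), (Fintype.card ι).choose k := by
  obtain ⟨S, hsep, hcover⟩ :=
    exists_pairwise_not_rel_covering (R := fun x y : ι → Bool => hammingDist x y ≤ m)
      (fun x => by simp) fun x y h => (hammingDist_comm y x).trans_le h
  refine ⟨S, fun x hx y hy hxy => not_le.mp (hsep hx hy hxy), ?_⟩
  calc 2 ^ Fintype.card ι = #(univ : Finset (ι → Bool)) := by simp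
    _ ≤ #(S.biUnion fun x => {y | hammingDist x y ≤ m}) := card_le_card fun y _ => by
        obtain ⟨x, hx, hxy⟩ := hcover y
        exact mem_biUnion.mpr ⟨x, hx, by simpa using hxy⟩
    _ ≤ ∑ x ∈ S, #{y | hammingDist x y ≤ m} := card_biUnion_le
    _ ≤ ∑ _x ∈ S, ∑ k ∈ range (m + 1), (Fintype.card ι).choose k :=
        sum_le_sum fun x _ => card_hammingDist_le_le_sum_choose x m
    _ = #S * ∑ k ∈ range (m + 1), (Fintype.card ι).choose k := by rw [sum_const, smul_eq_mul]

end Hamming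

theorem sum_range_choose_mul_three_pow_le {N m : ℕ} (h : m ≤ N) :
    (∑ k ∈ range (m + 1), N.choose k) * 3 ^ (N - m) ≤ 4 ^ N := by
  rw [sum_mul]
  calc ∑ k ∈ range (m + 1), N.choose k * 3 ^ (N - m)
      ≤ ∑ k ∈ range (N + 1), 1 ^ k * 3 ^ (N - k) * N.choose k := by
        refine (sum_le_sum fun k hk => ?_).trans
          (sum_le_sum_of_subset (range_subset_range.mpr (by omega)))
        rw [one_pow, one_mul, mul_comm]
        exact Nat.mul_le_mul_right _ (Nat.pow_le_pow_right (by norm_num)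
          (by simp at hk; omega))
    _ = (1 + 3) ^ N := (add_pow 1 3 N).symm

theorem Real.exp_div_sixteen_mul_four_pow_le {N m : ℕ} (h : 4 * m ≤ N) :
    Real.exp (N / 16) * 4 ^ N ≤ 2 ^ N * 3 ^ (N - m) := by
  have hexp : Real.exp (1 / 4) ≤ 4 / 3 := by
    have := Real.add_one_le_exp (-(1 / 4))
    rw [Real.exp_neg] at this
    rw [← inv_le_inv₀ (by norm_num : (0 : ℝ) < 4 / 3) (Real.exp_pos _)]
    linarith
  refine le_of_pow_le_pow_left₀ four_ne_zero (by positivity) ?_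
  calc (Real.exp (N / 16) * 4 ^ N) ^ 4 = (Real.exp (1 / 4) * 256) ^ N := by
        rw [mul_pow, mul_pow, ← Real.exp_nat_mul, ← Real.exp_nat_mul, ← pow_mul, pow_mul']
        congr 1
        · congr 1; ring
        · norm_num
    _ ≤ ((4 / 3) * 256) ^ N := by gcongr
    _ ≤ (16 * 27) ^ N := pow_le_pow_left₀ (by positivity) (by norm_num) N
    _ = 2 ^ (4 * N) * 3 ^ (3 * N) := by rw [mul_pow, pow_mul, pow_mul]; norm_num
    _ ≤ 2 ^ (4 * N) * 3 ^ (4 * (N - m)) :=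
        mul_le_mul_of_nonneg_left (pow_le_pow_right₀ (by norm_num) (by omega)) (by positivity)
    _ = (2 ^ N * 3 ^ (N - m)) ^ 4 := by ring

theorem exists_hammingDist_separated_exp_le_card (ι : Type*) [Fintype ι] [DecidableEq ι] :
    ∃ S : Finset (ι → Bool), (∀ x ∈ S, ∀ y ∈ S, x ≠ y → Fintype.card ι / 4 < hammingDist x y) ∧
      Real.exp (Fintype.card ι / 16) ≤ #S := by
  set N := Fintype.card ι
  obtain ⟨S, hsep, hcount⟩ := exists_hammingDist_separated_two_pow_le (ι := ι) (N / 4)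
  refine ⟨S, hsep, le_of_mul_le_mul_right ?_ (by positivity : (0 : ℝ) < 4 ^ N)⟩
  have hball := sum_range_choose_mul_three_pow_le (N := N) (m := N / 4) (by omega)
  have : 2 ^ N * 3 ^ (N - N / 4) ≤ #S * 4 ^ N := by
    calc 2 ^ N * 3 ^ (N - N / 4)
        ≤ #S * ((∑ k ∈ range (N / 4 + 1), N.choose k) * 3 ^ (N - N / 4)) := by
          rw [← mul_assoc]; exact Nat.mul_le_mul_right _ hcount
      _ ≤ #S * 4 ^ N := Nat.mul_le_mul_left _ hball
  calc Real.exp (N / 16) * 4 ^ N ≤ 2 ^ N * 3 ^ (N - N / 4) :=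
        Real.exp_div_sixteen_mul_four_pow_le (by omega)
    _ ≤ #S * 4 ^ N := by exact_mod_cast this

theorem frobSq_nonneg {d1 d2 : ℕ} (X : Matrix (Fin d1) (Fin d2) ℝ) : 0 ≤ frobSq X :=
  sum_nonneg fun _ _ => sum_nonneg fun _ _ => sq_nonneg _

theorem frobSq_eq_trace {d1 d2 : ℕ} (X : Matrix (Fin d1) (Fin d2) ℝ) :
    frobSq X = (Xᴴ * X).trace := by
  rw [Matrix.trace, frobSq, sum_comm]
  simp [Matrix.mul_apply, pow_two]

theorem frobSq_eq_of_forall_abs_eq {d1 d2 : ℕ} {X : Matrix (Fin d1) (Fin d2) ℝ} {b : ℝ}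
    (h : ∀ i j, |X i j| = b) : frobSq X = b ^ 2 * d1 * d2 := by
  simp only [frobSq, ← sq_abs (X _ _), h, sum_const, card_univ, Fintype.card_fin, nsmul_eq_mul]
  ring

theorem nuclearNorm_le_sqrt_rank_mul_frobSq {d1 d2 : ℕ} (X : Matrix (Fin d1) (Fin d2) ℝ) :
    nuclearNorm X ≤ √(X.rank * frobSq X) := by
  set hH := Matrix.isHermitian_conjTranspose_mul_self X
  set s : Finset (Fin d2) := {i | hH.eigenvalues i ≠ 0}
  have hnonneg : ∀ i, 0 ≤ hH.eigenvalues i :=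
    (Matrix.posSemidef_conjTranspose_mul_self X).eigenvalues_nonneg
  have hcard : #s = X.rank := by
    rw [← Matrix.rank_conjTranspose_mul_self X, hH.rank_eq_card_non_zero_eigs, Fintype.card_subtype]
  have hsum : ∑ i ∈ s, hH.eigenvalues i = frobSq X := by
    rw [sum_filter_ne_zero, frobSq_eq_trace, hH.trace_eq_sum_eigenvalues]
    simp
  have hnuc : nuclearNorm X = ∑ i ∈ s, √(hH.eigenvalues i) := by
    refine (sum_filter_of_ne fun i _ h => ?_).symm
    exact fun h0 => h (by rw [h0, Real.sqrt_zero])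
  rw [hnuc, Real.le_sqrt (sum_nonneg fun _ _ => Real.sqrt_nonneg _)
    (mul_nonneg (Nat.cast_nonneg _) (frobSq_nonneg X)), ← hcard, ← hsum]
  calc (∑ i ∈ s, √(hH.eigenvalues i)) ^ 2 ≤ #s * ∑ i ∈ s, √(hH.eigenvalues i) ^ 2 :=
        sq_sum_le_card_mul_sum_sq
    _ = #s * ∑ i ∈ s, hH.eigenvalues i := by simp only [Real.sq_sqrt (hnonneg _)]

def boolSign (b : Bool) : ℝ := if b then 1 else -1

theorem abs_boolSign (b : Bool) : |boolSign b| = 1 := by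
  cases b <;> simp [boolSign]

theorem boolSign_sub_sq (b b' : Bool) :
    (boolSign b - boolSign b') ^ 2 = if b = b' then 0 else 4 := by
  cases b <;> cases b' <;> norm_num [boolSign]

def signMatrix {m n : Type*} (a : ℝ) (c : m × n → Bool) : Matrix m n ℝ :=
  Matrix.of fun i j => a * boolSign (c (i, j))

theorem abs_signMatrix_apply {m n : Type*} (a : ℝ) (c : m × n → Bool) (i : m) (j : n) :
    |signMatrix a c i j| = |a| := by
  simp [signMatrix, abs_mul, abs_boolSign]

theorem frobSq_signMatrix_sub {n d : ℕ} (a : ℝ) (c c' : Fin n × Fin d → Bool) :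
    frobSq (signMatrix a c - signMatrix a c') = 4 * a ^ 2 * hammingDist c c' := by
  calc frobSq (signMatrix a c - signMatrix a c')
      = ∑ p : Fin n × Fin d, a ^ 2 * (boolSign (c p) - boolSign (c' p)) ^ 2 := by
        simp only [frobSq, Fintype.sum_prod_type, signMatrix, Matrix.sub_apply, Matrix.of_apply,
          ← mul_sub, mul_pow]
    _ = 4 * a ^ 2 * hammingDist c c' := by
        simp only [boolSign_sub_sq, mul_ite, mul_zero, sum_ite, sum_const_zero, zero_add,
          sum_const, nsmul_eq_mul, hammingDist]
        ring

theorem Function.Periodic.sum_range_mul {M : Type*} [AddCommMonoid M] {f : ℕ → M} {n : ℕ}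
    (hf : Function.Periodic f n) (q : ℕ) :
    ∑ i ∈ range (q * n), f i = q • ∑ i ∈ range n, f i := by
  induction q with
  | zero => simp
  | succ q ih =>
    rw [add_mul, one_mul, sum_range_add, ih, succ_nsmul]
    exact congrArg _ (sum_congr rfl fun i _ => by rw [add_comm]; exact hf.nat_mul q i)

section Tiling

variable {n : ℕ} [NeZero n]

theorem div_mul_sum_le_sum_comp_ofNat (d : ℕ) {g : Fin n → ℝ} (hg : 0 ≤ g) :
    ((d / n : ℕ) : ℝ) * ∑ k, g k ≤ ∑ i : Fin d, g (Fin.ofNat n i) := by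
  set f : ℕ → ℝ := fun i => g (Fin.ofNat n i)
  have hg_eq : ∑ k, g k = ∑ i ∈ range n, f i := by
    rw [← Fin.sum_univ_eq_sum_range]
    simp [f]
  have hf : Function.Periodic f n := fun i => congrArg g (Fin.ext (by simp))
  calc ((d / n : ℕ) : ℝ) * ∑ k, g k = ∑ i ∈ range (d / n * n), f i := by
        rw [hf.sum_range_mul, hg_eq, nsmul_eq_mul]
    _ ≤ ∑ i ∈ range d, f i :=
        sum_le_sum_of_subset_of_nonneg (range_subset_range.mpr (Nat.div_mul_le_self d n))
          fun i _ _ => by simpa [f] using hg _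
    _ = ∑ i : Fin d, g (Fin.ofNat n i) := (Fin.sum_univ_eq_sum_range f d).symm

def tileRows {κ R : Type*} (d : ℕ) (Y : Matrix (Fin n) κ R) : Matrix (Fin d) κ R :=
  Y.submatrix (fun i => Fin.ofNat n i) id

theorem tileRows_sub {κ R : Type*} [Sub R] (d : ℕ) (Y Y' : Matrix (Fin n) κ R) :
    tileRows d (Y - Y') = tileRows d Y - tileRows d Y' :=
  rfl

theorem rank_tileRows_le {R : Type*} [CommRing R] [StrongRankCondition R] {d2 : ℕ}
    (d : ℕ) (Y : Matrix (Fin n) (Fin d2) R) : (tileRows d Y).rank ≤ n :=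
  (Matrix.rank_submatrix_le _ _ _).trans Y.rank_le_height

theorem div_mul_frobSq_le_frobSq_tileRows {d1 d2 : ℕ} (Y : Matrix (Fin n) (Fin d2) ℝ) :
    ((d1 / n : ℕ) : ℝ) * frobSq Y ≤ frobSq (tileRows d1 Y) :=
  div_mul_sum_le_sum_comp_ofNat d1 fun _ => sum_nonneg fun _ _ => sq_nonneg _

theorem nuclearNorm_tileRows_signMatrix_le {d1 d2 : ℕ} (a : ℝ) (c : Fin n × Fin d2 → Bool) :
    nuclearNorm (tileRows d1 (signMatrix a c)) ≤ |a| * √(n * d1 * d2) := by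
  have habs : ∀ i j, |tileRows d1 (signMatrix a c) i j| = |a| := fun _ _ => abs_signMatrix_apply ..
  calc nuclearNorm (tileRows d1 (signMatrix a c))
      ≤ √((tileRows d1 (signMatrix a c)).rank * frobSq (tileRows d1 (signMatrix a c))) :=
        nuclearNorm_le_sqrt_rank_mul_frobSq _
    _ ≤ √(n * (|a| ^ 2 * d1 * d2)) := by
        rw [frobSq_eq_of_forall_abs_eq habs]
        gcongr
        exact_mod_cast rank_tileRows_le d1 _
    _ = |a| * √(n * d1 * d2) := by
        rw [show (n : ℝ) * (|a| ^ 2 * d1 * d2) = |a| ^ 2 * (n * d1 * d2) by ring,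
          Real.sqrt_mul (sq_nonneg _), Real.sqrt_sq (abs_nonneg a)]

theorem lt_frobSq_tileRows_signMatrix_sub {d1 d2 : ℕ} (hnd : n ≤ d1) {a : ℝ}
    (ha : a ≠ 0) {c c' : Fin n × Fin d2 → Bool} (h : n * d2 / 4 < hammingDist c c') :
    a ^ 2 * d1 * d2 / 2 <
      frobSq (tileRows d1 (signMatrix a c) - tileRows d1 (signMatrix a c')) := by
  set q := d1 / n
  set D := hammingDist c c'
  have hq : 0 < q := Nat.div_pos hnd (NeZero.pos n)
  have hd1 : d1 ≤ 2 * n * q := by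
    have hdiv : n * q + d1 % n = d1 := Nat.div_add_mod d1 n
    have := Nat.mod_lt d1 (NeZero.pos n)
    nlinarith [Nat.le_mul_of_pos_right n hq]
  have hD : n * d2 < 4 * D := by
    have := (Nat.div_lt_iff_lt_mul (by norm_num)).mp h
    linarith
  have hcount : d1 * d2 < 8 * q * D :=
    calc d1 * d2 ≤ 2 * n * q * d2 := Nat.mul_le_mul_right _ hd1
      _ = 2 * q * (n * d2) := by ring
      _ < 2 * q * (4 * D) := Nat.mul_lt_mul_of_pos_left hD (by omega)
      _ = 8 * q * D := by ring
  rw [← tileRows_sub]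
  refine lt_of_lt_of_le ?_ (div_mul_frobSq_le_frobSq_tileRows _)
  rw [frobSq_signMatrix_sub]
  have ha2 : 0 < a ^ 2 := by positivity
  calc a ^ 2 * d1 * d2 / 2 = a ^ 2 * ((d1 * d2 : ℕ) : ℝ) / 2 := by push_cast; ring
    _ < a ^ 2 * ((8 * q * D : ℕ) : ℝ) / 2 := by gcongr
    _ = q * (4 * a ^ 2 * D) := by push_cast; ring

theorem exists_tileRows_signMatrix_packing {d1 d2 : ℕ} (hnd : n ≤ d1) {a : ℝ} (ha : 0 < a) :
    ∃ χ : Finset (Matrix (Fin d1) (Fin d2) ℝ),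
      (∀ X ∈ χ, nuclearNorm X ≤ a * √(n * d1 * d2) ∧ ∀ i j, |X i j| = a) ∧
      Real.exp (n * d2 / 16) ≤ #χ ∧
      ∀ X ∈ χ, ∀ X' ∈ χ, X ≠ X' → a ^ 2 * d1 * d2 / 2 < frobSq (X - X') := by
  set M : (Fin n × Fin d2 → Bool) → Matrix (Fin d1) (Fin d2) ℝ :=
    fun c => tileRows d1 (signMatrix a c)
  obtain ⟨S, hsep, hcard⟩ := exists_hammingDist_separated_exp_le_card (Fin n × Fin d2)
  have hfar : ∀ c ∈ S, ∀ c' ∈ S, c ≠ c' → a ^ 2 * d1 * d2 / 2 < frobSq (M c - M c') :=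
    fun c hc c' hc' hcc' =>
      lt_frobSq_tileRows_signMatrix_sub hnd ha.ne' (by simpa using hsep c hc c' hc' hcc')
  have hinj : Set.InjOn M S := fun c hc c' hc' h => by
    by_contra hcc'
    have := hfar c hc c' hc' hcc'
    rw [h, sub_self] at this
    exact this.not_ge (by simp [frobSq]; positivity)
  refine ⟨S.image M, ?_, ?_, ?_⟩
  · simp only [mem_image, forall_exists_index, and_imp]
    rintro _ c - rfl
    refine ⟨?_, fun i j => (abs_signMatrix_apply _ _ _ _).trans (abs_of_pos ha)⟩
    simpa [abs_of_pos ha] using nuclearNorm_tileRows_signMatrix_le (d1 := d1) a c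
  · simpa [card_image_of_injOn hinj] using hcard
  · simp only [mem_image, forall_exists_index, and_imp]
    rintro _ c hc rfl _ c' hc' rfl hne
    exact hfar c hc c' hc' fun h => hne (h ▸ rfl)

end Tiling

theorem packing_set_exists_general (d1 d2 r : ℕ) (α γ : ℝ)
    (hα : 0 < α) (hr : 0 < r)
    (hγ0 : 0 < γ) (hγ1 : γ ≤ 1)
    (hint : ∃ n : ℕ, (n : ℝ) = (r : ℝ) / γ ^ 2)
    (hle : (r : ℝ) / γ ^ 2 ≤ d1) :
    ∃ χ : Finset (Matrix (Fin d1) (Fin d2) ℝ),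
      (∀ X ∈ χ, nuclearNorm X ≤ α * Real.sqrt ((r : ℝ) * d1 * d2) ∧ (∀ i j, |X i j| ≤ α)) ∧
      Real.exp ((r : ℝ) * d2 / (16 * γ ^ 2)) ≤ χ.card ∧
      (∀ X ∈ χ, ∀ i j, |X i j| = α * γ) ∧
      (∀ X ∈ χ, ∀ X' ∈ χ, X ≠ X' → α ^ 2 * γ ^ 2 * d1 * d2 / 2 < frobSq (X - X')) := by
  obtain ⟨n, hn⟩ := hint
  have hnγ : (n : ℝ) * γ ^ 2 = r := by rw [hn]; field_simp
  have hn0 : 0 < n := by exact_mod_cast hn ▸ (by positivity : (0 : ℝ) < r / γ ^ 2)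
  have hnd1 : n ≤ d1 := by exact_mod_cast hn ▸ hle
  have : NeZero n := ⟨hn0.ne'⟩
  obtain ⟨χ, hχ, hcard, hfar⟩ := exists_tileRows_signMatrix_packing (d2 := d2) hnd1 (mul_pos hα hγ0)
  refine ⟨χ, fun X hX => ⟨?_, fun i j => ?_⟩, ?_, fun X hX => (hχ X hX).2, ?_⟩
  · calc nuclearNorm X ≤ α * γ * √(n * d1 * d2) := (hχ X hX).1
      _ = α * √(r * d1 * d2) := by
        rw [← hnγ, show (n : ℝ) * γ ^ 2 * d1 * d2 = γ ^ 2 * (n * d1 * d2) by ring,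
          Real.sqrt_mul (sq_nonneg γ), Real.sqrt_sq hγ0.le, mul_assoc]
  · exact ((hχ X hX).2 i j).trans_le (mul_le_of_le_one_right hα.le hγ1)
  · convert hcard using 2
    rw [← hnγ]
    field_simp
  · simpa [mul_pow] using hfar

/-- Packing set construction (Lemma 4): there is a set `χ` inside
`H = {M : ‖M‖_* ≤ α√(r d1 d2), ‖M‖_∞ ≤ α}` of cardinality at least `exp(r d2/(16γ²))`,
all of whose entries have absolute value `αγ`, and whose distinct elements are
`‖X − X'‖_F² > α²γ² d1 d2 / 2` apart. -/
theorem packing_set_exists (d1 d2 r : ℕ) (α γ : ℝ)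
    (hα : 0 < α) (hr : 0 < r) (hd1 : 0 < d1) (hd2 : 0 < d2)
    (hγ0 : 0 < γ) (hγ1 : γ ≤ 1)
    (hint : ∃ n : ℕ, (n : ℝ) = (r : ℝ) / γ ^ 2)
    (hle : (r : ℝ) / γ ^ 2 ≤ d1) :
    ∃ χ : Finset (Matrix (Fin d1) (Fin d2) ℝ),
      (∀ X ∈ χ, nuclearNorm X ≤ α * Real.sqrt ((r : ℝ) * d1 * d2) ∧ (∀ i j, |X i j| ≤ α)) ∧
      Real.exp ((r : ℝ) * d2 / (16 * γ ^ 2)) ≤ χ.card ∧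
      (∀ X ∈ χ, ∀ i j, |X i j| = α * γ) ∧
      (∀ X ∈ χ, ∀ X' ∈ χ, X ≠ X' → α ^ 2 * γ ^ 2 * d1 * d2 / 2 < frobSq (X - X')) :=
  packing_set_exists_general d1 d2 r α γ hα hr hγ0 hγ1 hint hle
end

section
/- For all real numbers p, q > 0, the squared Hellinger distance between Poisson distributions is bounded by the Kullback–Leibler divergence: 2 − 2·exp(−(1/2)(√p − √q)²) ≤ p·log(p/q) − (p − q). -/
open Real

/-- The squared Hellinger distance between Poisson distributions is bounded by the
Kullback–Leibler divergence: for `p, q > 0`,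
`2 − 2 exp(−(1/2)(√p − √q)²) ≤ p log(p/q) − (p − q)`. -/
theorem poisson_hellinger_le_kl (p q : ℝ) (hp : 0 < p) (hq : 0 < q) :
    2 - 2 * Real.exp (-(1 / 2) * (Real.sqrt p - Real.sqrt q) ^ 2) ≤
      p * Real.log (p / q) - (p - q) := by
  have hsp := Real.sqrt_pos.mpr hp
  have hsq := Real.sqrt_pos.mpr hq
  have hpa : Real.sqrt p ^ 2 = p := Real.sq_sqrt hp.le
  have hqb : Real.sqrt q ^ 2 = q := Real.sq_sqrt hq.le
  have hlog : Real.log (Real.sqrt q / Real.sqrt p) ≤ Real.sqrt q / Real.sqrt p - 1 :=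
    Real.log_le_sub_one_of_pos (by positivity)
  rw [Real.log_div (ne_of_gt hsq) (ne_of_gt hsp)] at hlog
  have hlog2 : Real.sqrt p * (Real.log (Real.sqrt q) - Real.log (Real.sqrt p)) ≤
      Real.sqrt q - Real.sqrt p := by
    have h := mul_le_mul_of_nonneg_left hlog hsp.le
    have : Real.sqrt p * (Real.sqrt q / Real.sqrt p - 1) = Real.sqrt q - Real.sqrt p := by
      field_simp
    linarith [h, this.le, this.ge]
  have hld : Real.log (p / q) = 2 * Real.log (Real.sqrt p) - 2 * Real.log (Real.sqrt q) := by
    rw [Real.log_div (ne_of_gt hp) (ne_of_gt hq)]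
    nth_rewrite 1 [← hpa]
    nth_rewrite 1 [← hqb]
    rw [Real.log_pow, Real.log_pow]
    push_cast; ring
  have hexp : 1 + -(1 / 2) * (Real.sqrt p - Real.sqrt q) ^ 2 ≤
      Real.exp (-(1 / 2) * (Real.sqrt p - Real.sqrt q) ^ 2) := by
    linarith [Real.add_one_le_exp (-(1 / 2) * (Real.sqrt p - Real.sqrt q) ^ 2)]
  rw [hld]
  nlinarith [mul_le_mul_of_nonneg_left hlog2 hsp.le, sq_nonneg (Real.sqrt p - Real.sqrt q), hpa, hqb, hexp]
end

section
/- Let S be a nonempty closed convex subset of ℝ^{d1×d2} (with the Frobenius inner product), let f be convex and differentiable with ‖∇f(X) − ∇f(Y)‖_F ≤ L‖X−Y‖_F for all X, Y, and let 0 < t ≤ 1/L. For M ∈ S define G_t(M) = (1/t)(M − Π_S(M − t∇f(M))). Then for every Z ∈ S, f(M − t·G_t(M)) ≤ f(Z) + ⟨G_t(M), M − Z⟩ − (t/2)‖G_t(M)‖_F². -/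
/-!
Write `G` for the gradient mapping and `P = Π_S(M - t∇f(M)) = M - tG`. The descent lemma for an
`L`-Lipschitz gradient, together with `Lt ≤ 1`, gives `f P ≤ f M - t⟪∇f(M), G⟫ + (t/2)‖G‖²`;
the gradient inequality for convex `f` gives `f M ≤ f Z + ⟪∇f(M), M - Z⟫`; and the variational
inequality of the projection, `⟪M - t∇f(M) - P, Z - P⟫ ≤ 0`, divided by `t`, reads
`⟪∇f(M), M - Z⟫ - t⟪∇f(M), G⟫ ≤ ⟪G, M - Z⟫ - t‖G‖²`. Adding the three gives the claim.
-/

open AffineMap (lineMap lineMap_apply_zero lineMap_apply_one lineMap_vsub_left hasDerivAt_lineMap)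
open Set
open scoped RealInnerProductSpace

section GradientMapping

variable {E : Type*} [NormedAddCommGroup E] [InnerProductSpace ℝ E] {f : E → ℝ} {g x y : E}

theorem HasGradientAt.hasDerivAt_comp_lineMap [CompleteSpace E] {s : ℝ}
    (h : HasGradientAt f g (lineMap x y s)) :
    HasDerivAt (f ∘ lineMap x y) ⟪g, y - x⟫ s :=
  (hasGradientAt_iff_hasFDerivAt.mp h).comp_hasDerivAt s hasDerivAt_lineMap

theorem ConvexOn.add_inner_le_of_hasGradientAt [CompleteSpace E] {s : Set E}
    (hf : ConvexOn ℝ s f) (hx : x ∈ s) (hy : y ∈ s) (h : HasGradientAt f g x) :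
    f x + ⟪g, y - x⟫ ≤ f y := by
  have hline : ConvexOn ℝ (lineMap x y ⁻¹' s) (f ∘ lineMap (k := ℝ) x y) :=
    hf.comp_affineMap _
  have hderiv : HasDerivAt (f ∘ lineMap (k := ℝ) x y) ⟪g, y - x⟫ 0 :=
    HasGradientAt.hasDerivAt_comp_lineMap (by rwa [lineMap_apply_zero])
  have hslope :=
    hline.le_slope_of_hasDerivAt (by simpa using hx) (by simpa using hy) zero_lt_one hderiv
  simp only [slope_def_field, Function.comp_apply, lineMap_apply_zero, lineMap_apply_one]
    at hslope
  linarith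

theorem le_add_inner_add_half_mul_sq_of_lipschitz_gradient [CompleteSpace E] {f' : E → E}
    {L : ℝ} (hgrad : ∀ z, HasGradientAt f (f' z) z)
    (hlip : ∀ z, ‖f' z - f' x‖ ≤ L * ‖z - x‖) (y : E) :
    f y ≤ f x + ⟪f' x, y - x⟫ + L / 2 * ‖y - x‖ ^ 2 := by
  set v := y - x
  -- the gap between `f` and its quadratic upper model along the segment is antitone
  let φ : ℝ → ℝ := fun s => f (lineMap x y s) - s * ⟪f' x, v⟫ - L / 2 * ‖v‖ ^ 2 * s ^ 2
  let φ' : ℝ → ℝ := fun s => ⟪f' (lineMap x y s) - f' x, v⟫ - L * ‖v‖ ^ 2 * s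
  have hφ (s : ℝ) : HasDerivAt φ (φ' s) s := by
    refine ((((hgrad _).hasDerivAt_comp_lineMap).sub ((hasDerivAt_id' s).mul_const _)).sub
      ((hasDerivAt_pow 2 s).const_mul (L / 2 * ‖v‖ ^ 2))).congr_deriv ?_
    simp only [φ', inner_sub_left]
    ring
  have hφ'_nonpos (s : ℝ) (hs : 0 ≤ s) : φ' s ≤ 0 := by
    have hdist : ‖lineMap x y s - x‖ = s * ‖v‖ := by
      rw [← vsub_eq_sub, lineMap_vsub_left, vsub_eq_sub, norm_smul, Real.norm_of_nonneg hs]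
    calc φ' s ≤ ‖f' (lineMap x y s) - f' x‖ * ‖v‖ - L * ‖v‖ ^ 2 * s :=
          sub_le_sub_right (real_inner_le_norm _ _) _
      _ ≤ L * (s * ‖v‖) * ‖v‖ - L * ‖v‖ ^ 2 * s := by
          gcongr
          exact hdist ▸ hlip _
      _ = 0 := by ring
  have hanti : AntitoneOn φ (Ici 0) :=
    antitoneOn_of_hasDerivWithinAt_nonpos (convex_Ici 0)
      (fun s _ => (hφ s).continuousAt.continuousWithinAt)
      (fun s _ => (hφ s).hasDerivWithinAt)
      (fun s hs => hφ'_nonpos s (le_of_lt (by rwa [interior_Ici] at hs)))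
  have hφ01 := hanti self_mem_Ici (zero_le_one' ℝ) zero_le_one
  simp only [φ, lineMap_apply_zero, lineMap_apply_one] at hφ01
  linarith

theorem Convex.inner_sub_le_zero_of_forall_norm_sub_le {K : Set E} (hK : Convex ℝ K)
    {u p : E} (hp : p ∈ K) (hmin : ∀ w ∈ K, ‖p - u‖ ≤ ‖w - u‖) :
    ∀ w ∈ K, ⟪u - p, w - p⟫ ≤ 0 := by
  have : Nonempty K := ⟨⟨p, hp⟩⟩
  refine (norm_eq_iInf_iff_real_inner_le_zero hK hp).mp (le_antisymm ?_ ?_)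
  · exact le_ciInf fun w => by simpa only [norm_sub_rev u] using hmin w w.2
  · exact ciInf_le ⟨0, forall_mem_range.2 fun w : K => norm_nonneg (u - w)⟩ (⟨p, hp⟩ : K)

/-- `G_t(M)`, with `proj` in the role of `Π_S` and `f'` in that of `∇f`. -/
noncomputable def gradientMapping (proj f' : E → E) (t : ℝ) (M : E) : E :=
  (1 / t) • (M - proj (M - t • f' M))

theorem smul_gradientMapping {proj f' : E → E} {t : ℝ} (ht : t ≠ 0) (M : E) :
    t • gradientMapping proj f' t M = M - proj (M - t • f' M) := by
  rw [gradientMapping, smul_smul, mul_one_div_cancel ht, one_smul]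

theorem apply_sub_smul_gradientMapping_le [CompleteSpace E] {S : Set E} (hS : Convex ℝ S)
    {f' proj : E → E} (hf : ConvexOn ℝ univ f) (hgrad : ∀ z, HasGradientAt f (f' z) z)
    {L t : ℝ} {M : E} (hlip : ∀ z, ‖f' z - f' M‖ ≤ L * ‖z - M‖)
    (hproj : ∀ y, proj y ∈ S ∧ ∀ x ∈ S, ‖proj y - y‖ ≤ ‖x - y‖) (ht : 0 < t) (hLt : L * t ≤ 1)
    {Z : E} (hZ : Z ∈ S) :
    f (M - t • gradientMapping proj f' t M) ≤
      f Z + ⟪gradientMapping proj f' t M, M - Z⟫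
        - t / 2 * ‖gradientMapping proj f' t M‖ ^ 2 := by
  set G := gradientMapping proj f' t M
  have hP : proj (M - t • f' M) = M - t • G := by
    rw [smul_gradientMapping ht.ne', sub_sub_cancel]
  have hdescent : f (M - t • G) ≤ f M - t * ⟪f' M, G⟫ + L / 2 * (t * ‖G‖) ^ 2 := by
    have h := le_add_inner_add_half_mul_sq_of_lipschitz_gradient hgrad hlip (M - t • G)
    rw [sub_sub_cancel_left, inner_neg_right, norm_neg, real_inner_smul_right, norm_smul,
      Real.norm_of_nonneg ht.le] at h
    linarith
  have hquad : L / 2 * (t * ‖G‖) ^ 2 ≤ t / 2 * ‖G‖ ^ 2 :=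
    calc L / 2 * (t * ‖G‖) ^ 2 = L * t * (t / 2 * ‖G‖ ^ 2) := by ring
      _ ≤ t / 2 * ‖G‖ ^ 2 := mul_le_of_le_one_left (by positivity) hLt
  have hconvex : f M + ⟪f' M, Z - M⟫ ≤ f Z :=
    hf.add_inner_le_of_hasGradientAt (mem_univ M) (mem_univ Z) (hgrad M)
  have hvar : ⟪G, Z - M⟫ - ⟪f' M, Z - M⟫ + t * ‖G‖ ^ 2 - t * ⟪f' M, G⟫ ≤ 0 := by
    have h := hS.inner_sub_le_zero_of_forall_norm_sub_le (u := M - t • f' M)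
      (hproj _).1 (hproj _).2 Z hZ
    rw [hP, sub_sub_sub_cancel_left, ← smul_sub, sub_sub_eq_add_sub, add_sub_right_comm,
      real_inner_smul_left] at h
    have h' := nonpos_of_mul_nonpos_right h ht
    simp only [inner_add_right, inner_sub_left, real_inner_smul_right,
      real_inner_self_eq_norm_sq] at h'
    linarith
  rw [← neg_sub Z M, inner_neg_right]
  linarith

end GradientMapping

theorem gradient_mapping_inequality_general (d1 d2 : ℕ)
    (S : Set (EuclideanSpace ℝ (Fin d1 × Fin d2)))
    (hconv : Convex ℝ S)
    (f : EuclideanSpace ℝ (Fin d1 × Fin d2) → ℝ)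
    (f' : EuclideanSpace ℝ (Fin d1 × Fin d2) → EuclideanSpace ℝ (Fin d1 × Fin d2))
    (hf : ConvexOn ℝ Set.univ f)
    (hgrad : ∀ x, HasGradientAt f (f' x) x)
    (L : ℝ) (hL : 0 < L)
    (hlip : ∀ x y, ‖f' x - f' y‖ ≤ L * ‖x - y‖)
    (proj : EuclideanSpace ℝ (Fin d1 × Fin d2) → EuclideanSpace ℝ (Fin d1 × Fin d2))
    (hproj : ∀ y, proj y ∈ S ∧ ∀ x ∈ S, ‖proj y - y‖ ≤ ‖x - y‖)
    (t : ℝ) (ht0 : 0 < t) (ht1 : t ≤ 1 / L)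
    (M : EuclideanSpace ℝ (Fin d1 × Fin d2)) :
    ∀ Z ∈ S,
      f (M - t • ((1 / t) • (M - proj (M - t • f' M)))) ≤
        f Z + ⟪(1 / t) • (M - proj (M - t • f' M)), M - Z⟫
          - t / 2 * ‖(1 / t) • (M - proj (M - t • f' M))‖ ^ 2 :=
  fun _ hZ => apply_sub_smul_gradientMapping_le hconv hf hgrad (fun z => hlip z M) hproj ht0
    (by rwa [le_div_iff₀ hL, mul_comm] at ht1) hZ

/-- Key inequality for the projected gradient mapping: for `0 < t ≤ 1/L`,
`G_t(M) = (1/t)(M − Π_S(M − t∇f(M)))`, and any `Z ∈ S`,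
`f(M − t G_t(M)) ≤ f(Z) + ⟨G_t(M), M − Z⟩ − (t/2)‖G_t(M)‖²`. -/
theorem gradient_mapping_inequality (d1 d2 : ℕ)
    (S : Set (EuclideanSpace ℝ (Fin d1 × Fin d2)))
    (hne : S.Nonempty) (hcl : IsClosed S) (hconv : Convex ℝ S)
    (f : EuclideanSpace ℝ (Fin d1 × Fin d2) → ℝ)
    (f' : EuclideanSpace ℝ (Fin d1 × Fin d2) → EuclideanSpace ℝ (Fin d1 × Fin d2))
    (hf : ConvexOn ℝ Set.univ f)
    (hgrad : ∀ x, HasGradientAt f (f' x) x)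
    (L : ℝ) (hL : 0 < L)
    (hlip : ∀ x y, ‖f' x - f' y‖ ≤ L * ‖x - y‖)
    (proj : EuclideanSpace ℝ (Fin d1 × Fin d2) → EuclideanSpace ℝ (Fin d1 × Fin d2))
    (hproj : ∀ y, proj y ∈ S ∧ ∀ x ∈ S, ‖proj y - y‖ ≤ ‖x - y‖)
    (t : ℝ) (ht0 : 0 < t) (ht1 : t ≤ 1 / L)
    (M : EuclideanSpace ℝ (Fin d1 × Fin d2)) (hM : M ∈ S) :
    ∀ Z ∈ S,
      f (M - t • ((1 / t) • (M - proj (M - t • f' M)))) ≤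
        f Z + ⟪(1 / t) • (M - proj (M - t • f' M)), M - Z⟫
          - t / 2 * ‖(1 / t) • (M - proj (M - t • f' M))‖ ^ 2 :=
  gradient_mapping_inequality_general d1 d2 S hconv f f' hf hgrad L hL hlip proj hproj t ht0 ht1 M
end

section
/- Let S be a nonempty closed convex subset of ℝ^{d1×d2} (with the Frobenius inner product), let f be convex and differentiable with ‖∇f(X) − ∇f(Y)‖_F ≤ L‖X−Y‖_F for all X, Y (L > 0), and let M̂ be a minimizer of f over S. If M_k ∈ S and M_{k+1} = Π_S(M_k − (1/L)∇f(M_k)), then f(M_{k+1}) − f(M̂) ≤ (L/2)(‖M_k − M̂‖_F² − ‖M_{k+1} − M̂‖_F²). -/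
/-! Three standard inequalities add up to the claim. Write `x, y, z` for `M_k, M_{k+1}, M̂` and
`g = ∇f(x)`. The Lipschitz gradient gives the descent lemma
`f(y) ≤ f(x) + ⟪g, y − x⟫ + (L/2)‖y − x‖²`, convexity gives `f(x) + ⟪g, z − x⟫ ≤ f(z)`, and the
variational inequality of the projection `y = Π_S(x − g/L)` gives `⟪g, y − z⟫ ≤ L⟪x − y, y − z⟫`.
Hence `f(y) − f(z) ≤ L⟪x − y, y − z⟫ + (L/2)‖x − y‖²`, which equals
`(L/2)(‖x − z‖² − ‖y − z‖²)` after expanding `‖x − z‖² = ‖(x − y) + (y − z)‖²`. -/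

open Set AffineMap
open scoped RealInnerProductSpace

variable {E : Type*} [NormedAddCommGroup E] [InnerProductSpace ℝ E]

theorem real_inner_sub_le_zero_of_forall_norm_sub_le {S : Set E} (hS : Convex ℝ S) {u v w : E}
    (hv : v ∈ S) (hmin : ∀ x ∈ S, ‖v - u‖ ≤ ‖x - u‖) (hw : w ∈ S) : ⟪u - v, w - v⟫ ≤ 0 := by
  have : Nonempty S := ⟨⟨v, hv⟩⟩
  refine (norm_eq_iInf_iff_real_inner_le_zero hS hv).1 (le_antisymm ?_ ?_) w hw
  · exact le_ciInf fun x => by simpa only [norm_sub_rev u] using hmin x x.2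
  · exact ciInf_le (f := fun x : S => ‖u - x‖) ⟨0, by rintro r ⟨x, rfl⟩; positivity⟩ ⟨v, hv⟩

theorem inner_le_of_projected_gradient_step {S : Set E} (hS : Convex ℝ S) {x v g w : E} {L : ℝ}
    (hL : 0 < L) (hv : v ∈ S) (hmin : ∀ y ∈ S, ‖v - (x - (1 / L) • g)‖ ≤ ‖y - (x - (1 / L) • g)‖)
    (hw : w ∈ S) : ⟪g, v - w⟫ ≤ L * ⟪x - v, v - w⟫ := by
  have h := real_inner_sub_le_zero_of_forall_norm_sub_le hS hv hmin hw
  rw [sub_right_comm, inner_sub_left, inner_smul_left, ← neg_sub v w, inner_neg_right,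
    inner_neg_right] at h
  simp only [conj_trivial] at h
  field_simp at h
  linarith

section Gradient

variable [CompleteSpace E]

theorem HasGradientAt.hasDerivAt_comp_lineMap_s17 {f : E → ℝ} {g a b : E} {t : ℝ}
    (hf : HasGradientAt f g (lineMap a b t)) :
    HasDerivAt (fun s => f (lineMap a b s)) ⟪g, b - a⟫ t := by
  have h := hf.hasFDerivAt.comp_hasDerivAt t hasDerivAt_lineMap
  rw [InnerProductSpace.toDual_apply_apply] at h
  exact h

theorem ConvexOn.inner_gradient_le_sub {s : Set E} {f : E → ℝ} {g a b : E}
    (hf : ConvexOn ℝ s f) (ha : a ∈ s) (hb : b ∈ s) (hg : HasGradientAt f g a) :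
    ⟪g, b - a⟫ ≤ f b - f a := by
  have hline : ConvexOn ℝ (lineMap a b ⁻¹' s) (fun t => f (lineMap a b t)) :=
    hf.comp_affineMap (lineMap a b)
  have hg0 : HasGradientAt f g (lineMap a b (0 : ℝ)) := by rwa [lineMap_apply_zero]
  simpa [slope] using hline.le_slope_of_hasDerivAt (by simpa using ha) (by simpa using hb)
    one_pos hg0.hasDerivAt_comp_lineMap_s17

theorem le_add_inner_gradient_add_sq {f : E → ℝ} {f' : E → E} {L : ℝ} {a : E}
    (hgrad : ∀ x, HasGradientAt f (f' x) x) (hlip : ∀ x, ‖f' x - f' a‖ ≤ L * ‖x - a‖) (b : E) :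
    f b ≤ f a + ⟪f' a, b - a⟫ + L / 2 * ‖b - a‖ ^ 2 := by
  set d := b - a
  have hφ (t : ℝ) : HasDerivAt (fun s => f (lineMap a b s)) ⟪f' (lineMap a b t), d⟫ t :=
    (hgrad _).hasDerivAt_comp_lineMap_s17
  have hB (t : ℝ) : HasDerivAt (fun s => f a + (s * ⟪f' a, d⟫ + L / 2 * s ^ 2 * ‖d‖ ^ 2))
      (⟪f' a, d⟫ + L * t * ‖d‖ ^ 2) t :=
    ((((hasDerivAt_id' t).mul_const _).fun_add
      (((hasDerivAt_pow 2 t).const_mul (L / 2)).mul_const (‖d‖ ^ 2))).const_add (f a)).congr_deriv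
      (by push_cast; ring)
  have hbound (t : ℝ) (ht : t ∈ Ico (0 : ℝ) 1) :
      ⟪f' (lineMap a b t), d⟫ ≤ ⟪f' a, d⟫ + L * t * ‖d‖ ^ 2 := by
    have hdist : ‖lineMap a b t - a‖ = t * ‖d‖ := by
      rw [← vsub_eq_sub, lineMap_vsub_left, norm_smul, Real.norm_of_nonneg ht.1, vsub_eq_sub]
    calc ⟪f' (lineMap a b t), d⟫
        = ⟪f' a, d⟫ + ⟪f' (lineMap a b t) - f' a, d⟫ := by rw [inner_sub_left]; ring
      _ ≤ ⟪f' a, d⟫ + ‖f' (lineMap a b t) - f' a‖ * ‖d‖ := by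
          gcongr; exact real_inner_le_norm _ _
      _ ≤ ⟪f' a, d⟫ + L * (t * ‖d‖) * ‖d‖ := by gcongr; exact hdist ▸ hlip _
      _ = ⟪f' a, d⟫ + L * t * ‖d‖ ^ 2 := by ring
  have := image_le_of_deriv_right_le_deriv_boundary
    (fun t _ => (hφ t).continuousAt.continuousWithinAt) (fun t _ => (hφ t).hasDerivWithinAt)
    (by simp) (fun t _ => (hB t).continuousAt.continuousWithinAt)
    (fun t _ => (hB t).hasDerivWithinAt) hbound (right_mem_Icc.2 zero_le_one)
  simpa [add_assoc] using this

end Gradient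

theorem projected_gradient_one_step_general (d1 d2 : ℕ)
    (S : Set (EuclideanSpace ℝ (Fin d1 × Fin d2)))
    (hconv : Convex ℝ S)
    (f : EuclideanSpace ℝ (Fin d1 × Fin d2) → ℝ)
    (f' : EuclideanSpace ℝ (Fin d1 × Fin d2) → EuclideanSpace ℝ (Fin d1 × Fin d2))
    (hf : ConvexOn ℝ Set.univ f)
    (hgrad : ∀ x, HasGradientAt f (f' x) x)
    (L : ℝ) (hL : 0 < L)
    (hlip : ∀ x y, ‖f' x - f' y‖ ≤ L * ‖x - y‖)
    (Mhat : EuclideanSpace ℝ (Fin d1 × Fin d2))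
    (hMhatS : Mhat ∈ S)
    (Mk Mk1 : EuclideanSpace ℝ (Fin d1 × Fin d2))
    (hMk1S : Mk1 ∈ S)
    (hMk1proj : ∀ x ∈ S, ‖Mk1 - (Mk - (1 / L) • f' Mk)‖ ≤ ‖x - (Mk - (1 / L) • f' Mk)‖) :
    f Mk1 - f Mhat ≤ L / 2 * (‖Mk - Mhat‖ ^ 2 - ‖Mk1 - Mhat‖ ^ 2) := by
  have hdescent := le_add_inner_gradient_add_sq hgrad (fun x => hlip x Mk) Mk1
  have hconvex := hf.inner_gradient_le_sub (mem_univ Mk) (mem_univ Mhat) (hgrad Mk)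
  have hproj := inner_le_of_projected_gradient_step hconv hL hMk1S hMk1proj hMhatS
  have hsq :
      ‖Mk - Mhat‖ ^ 2 = ‖Mk - Mk1‖ ^ 2 + 2 * ⟪Mk - Mk1, Mk1 - Mhat⟫ + ‖Mk1 - Mhat‖ ^ 2 := by
    rw [← norm_add_sq_real, sub_add_sub_cancel]
  have hinner : ⟪f' Mk, Mk1 - Mk⟫ - ⟪f' Mk, Mhat - Mk⟫ = ⟪f' Mk, Mk1 - Mhat⟫ := by
    rw [← inner_sub_right, sub_sub_sub_cancel_right]
  rw [norm_sub_rev] at hdescent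
  rw [hsq]
  linarith

/-- One-step progress of projected gradient descent: if `M_{k+1} = Π_S(M_k − (1/L)∇f(M_k))`
with `M_k ∈ S` and `M̂` minimizes `f` over `S`, then
`f(M_{k+1}) − f(M̂) ≤ (L/2)(‖M_k − M̂‖² − ‖M_{k+1} − M̂‖²)`. -/
theorem projected_gradient_one_step (d1 d2 : ℕ)
    (S : Set (EuclideanSpace ℝ (Fin d1 × Fin d2)))
    (hne : S.Nonempty) (hcl : IsClosed S) (hconv : Convex ℝ S)
    (f : EuclideanSpace ℝ (Fin d1 × Fin d2) → ℝ)
    (f' : EuclideanSpace ℝ (Fin d1 × Fin d2) → EuclideanSpace ℝ (Fin d1 × Fin d2))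
    (hf : ConvexOn ℝ Set.univ f)
    (hgrad : ∀ x, HasGradientAt f (f' x) x)
    (L : ℝ) (hL : 0 < L)
    (hlip : ∀ x y, ‖f' x - f' y‖ ≤ L * ‖x - y‖)
    (Mhat : EuclideanSpace ℝ (Fin d1 × Fin d2))
    (hMhatS : Mhat ∈ S) (hMhatmin : ∀ x ∈ S, f Mhat ≤ f x)
    (Mk Mk1 : EuclideanSpace ℝ (Fin d1 × Fin d2)) (hMk : Mk ∈ S)
    (hMk1S : Mk1 ∈ S)
    (hMk1proj : ∀ x ∈ S, ‖Mk1 - (Mk - (1 / L) • f' Mk)‖ ≤ ‖x - (Mk - (1 / L) • f' Mk)‖) :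
    f Mk1 - f Mhat ≤ L / 2 * (‖Mk - Mhat‖ ^ 2 - ‖Mk1 - Mhat‖ ^ 2) :=
  projected_gradient_one_step_general d1 d2 S hconv f f' hf hgrad L hL hlip Mhat hMhatS Mk Mk1 hMk1S
    hMk1proj
end
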